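/- arXiv:0911.3923 — 2 statements merged into one kernel-verified Lean document; each statement's English description precedes it below -/
import Mathlib

section
/- Any two triangles of the Farey graph F are chain-connected in F: for any triangles Δ, Δ' of F there is a finite sequence of triangles Δ = Δ₁, …, Δ_m = Δ' of F such that for each j the intersection Δ_j ∩ Δ_{j+1} consists of two adjacent vertices. -/
/-- A coprime pair of integers, representing a vertex of the Farey graph. -/
def FareyPair : Type := {p : ℤ × ℤ // IsCoprime p.1 p.2}

/-- The equivalence identifying a coprime pair with its negation. -/
def fareySetoid : Setoid FareyPair where
  r x y := x.val = y.val ∨ x.val = -y.val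
  iseqv := by
    refine ⟨fun x => Or.inl rfl, ?_, ?_⟩
    · rintro x y (h | h)
      · exact Or.inl h.symm
      · exact Or.inr (by rw [h, neg_neg])
    · rintro x y z (h1 | h1) (h2 | h2)
      · exact Or.inl (h1.trans h2)
      · exact Or.inr (by rw [h1, h2])
      · exact Or.inr (by rw [h1, h2])
      · exact Or.inl (by rw [h1, h2, neg_neg])

/-- A vertex of the Farey graph: a coprime pair of integers up to simultaneous
negation. -/
def FareyVertex : Type := Quotient fareySetoid

/-- The vertex `[p:q]` of the Farey graph. -/
def fareyMk (p q : ℤ) (h : IsCoprime p q) : FareyVertex :=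
  Quotient.mk fareySetoid ⟨(p, q), h⟩

/-- The determinant `p * s - q * r` of two pairs `(p, q)` and `(r, s)`. -/
def fareyDet (x y : FareyPair) : ℤ := x.val.1 * y.val.2 - x.val.2 * y.val.1

private lemma farey_abs_helper (a b : ℤ) (h : a = b ∨ a = -b) :
    (|a| = 1) = (|b| = 1) := by
  rcases h with h | h <;> (rw [h]; try simp)

/-- The Farey graph: vertices `[p:q]` and `[r:s]` are adjacent iff `|ps - qr| = 1`. -/
def FareyGraph : SimpleGraph FareyVertex where
  Adj := Quotient.lift₂ (fun x y => |fareyDet x y| = 1) (by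
    rintro x y x' y' (h1 | h1) (h2 | h2) <;> apply farey_abs_helper
    · exact Or.inl (by simp only [fareyDet, h1, h2])
    · refine Or.inr ?_
      simp only [fareyDet, h1, h2, Prod.fst_neg, Prod.snd_neg]
      ring
    · refine Or.inr ?_
      simp only [fareyDet, h1, h2, Prod.fst_neg, Prod.snd_neg]
      ring
    · refine Or.inl ?_
      simp only [fareyDet, h1, h2, Prod.fst_neg, Prod.snd_neg]
      ring)
  symm := by
    constructor
    intro u v
    refine Quotient.inductionOn₂ u v ?_
    intro x y h
    change |fareyDet x y| = 1 at h
    change |fareyDet y x| = 1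
    rw [show fareyDet y x = -fareyDet x y from by simp only [fareyDet]; ring,
      abs_neg]
    exact h
  loopless := by
    constructor
    intro u
    refine Quotient.inductionOn u ?_
    intro x h
    change |fareyDet x x| = 1 at h
    rw [show fareyDet x x = 0 from by simp only [fareyDet]; ring] at h
    simp at h

noncomputable instance : DecidableEq FareyVertex := Classical.decEq _


/-- Two triangles `s, t` of a simple graph `G` are chain-connected in `G` if there is
a finite sequence of triangles from `s` to `t` in which consecutive triangles meet
along an edge of `G`. -/
def ChainConnected {V : Type*} [DecidableEq V] (G : SimpleGraph V)
    (s t : Finset V) : Prop :=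
  ∃ (m : ℕ) (c : Fin (m + 1) → Finset V),
    c 0 = s ∧ c (Fin.last m) = t ∧ (∀ i, G.IsNClique 3 (c i)) ∧
    ∀ i : Fin m, ∃ x y : V, G.Adj x y ∧ c i.castSucc ∩ c i.succ = {x, y}


/-! Every triangle of the Farey graph is the triangle `{[a], [b], [a + b]}` spanned by the columns
`a, b` of a matrix `g ∈ SL(2, ℤ)`. Left multiplication by `SL(2, ℤ)` acts on the Farey graph by
automorphisms, so the set of `g` whose triangle is chain-connected to the triangle of `1` is a
subgroup. It contains the generators `S` and `T` of `SL(2, ℤ)`, whose triangles share an edge with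
the triangle of `1`, hence it is everything. -/

open Relation MatrixGroups ModularGroup

theorem Finset.insert_insert_inter_insert_insert {α : Type*} [DecidableEq α] {a b c d : α}
    (h : c ≠ d) : ({a, b, c} : Finset α) ∩ {a, b, d} = {a, b} := by
  ext x
  simp only [Finset.mem_inter, Finset.mem_insert, Finset.mem_singleton]
  constructor
  · rintro ⟨h₁ | h₁ | rfl, h₂ | h₂ | rfl⟩ <;> tauto
  · tauto

namespace SimpleGraph

variable {V W : Type*} {G : SimpleGraph V} {H : SimpleGraph W} {s t : Finset V}

theorem IsNClique.map_embedding {n : ℕ} (φ : G ↪g H) (h : G.IsNClique n s) :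
    H.IsNClique n (s.map φ.toEmbedding) :=
  h.map.mono <| by rintro _ _ ⟨-, x, y, hxy, rfl, rfl⟩; exact φ.map_adj_iff.2 hxy

variable [DecidableEq V] [DecidableEq W]

def TriangleAdj (G : SimpleGraph V) (s t : Finset V) : Prop :=
  G.IsNClique 3 s ∧ G.IsNClique 3 t ∧ ∃ x y, G.Adj x y ∧ s ∩ t = {x, y}

theorem TriangleAdj.symm (h : G.TriangleAdj s t) : G.TriangleAdj t s :=
  let ⟨hs, ht, x, y, hxy, hst⟩ := h
  ⟨ht, hs, x, y, hxy, by rwa [Finset.inter_comm]⟩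

instance : Std.Symm G.TriangleAdj := ⟨fun _ _ ↦ TriangleAdj.symm⟩

theorem TriangleAdj.map (φ : G ↪g H) (h : G.TriangleAdj s t) :
    H.TriangleAdj (s.map φ.toEmbedding) (t.map φ.toEmbedding) := by
  obtain ⟨hs, ht, x, y, hxy, hst⟩ := h
  refine ⟨hs.map_embedding φ, ht.map_embedding φ, φ x, φ y, φ.map_adj_iff.2 hxy, ?_⟩
  rw [← Finset.map_inter, hst, Finset.map_insert, Finset.map_singleton]
  rfl

end SimpleGraph

section ChainConnected

variable {V : Type*} [DecidableEq V] {G : SimpleGraph V} {s t u : Finset V}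

theorem ChainConnected.refl (hs : G.IsNClique 3 s) : ChainConnected G s s :=
  ⟨0, fun _ ↦ s, rfl, rfl, fun _ ↦ hs, fun i ↦ i.elim0⟩

theorem ChainConnected.tail (h : ChainConnected G s t) (htu : G.TriangleAdj t u) :
    ChainConnected G s u := by
  obtain ⟨m, c, hc0, hcm, hc, hcc⟩ := h
  obtain ⟨-, hu, x, y, hxy, htu⟩ := htu
  refine ⟨m + 1, Fin.snoc c u, by simpa using hc0, by simp, ?_, ?_⟩
  · intro i
    induction i using Fin.lastCases with
    | last => simpa using hu
    | cast j => simpa using hc j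
  · intro i
    induction i using Fin.lastCases with
    | last => exact ⟨x, y, hxy, by simpa [hcm] using htu⟩
    | cast j => simpa only [Fin.succ_castSucc, Fin.snoc_castSucc] using hcc j

theorem chainConnected_of_reflTransGen (hs : G.IsNClique 3 s)
    (h : ReflTransGen G.TriangleAdj s t) : ChainConnected G s t := by
  induction h with
  | refl => exact .refl hs
  | tail _ htu ih => exact ih.tail htu

end ChainConnected

namespace Farey

def det (a b : ℤ × ℤ) : ℤ := a.1 * b.2 - a.2 * b.1

section Det

variable {a b : ℤ × ℤ}

theorem isCoprime_of_det_eq_one_left (h : det a b = 1) : IsCoprime a.1 a.2 :=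
  ⟨b.2, -b.1, by rw [← h, det]; ring⟩

theorem isCoprime_of_det_eq_one_right (h : det a b = 1) : IsCoprime b.1 b.2 :=
  ⟨-a.2, a.1, by rw [← h, det]; ring⟩

theorem exists_det_eq_one_of_isCoprime (h : IsCoprime a.1 a.2) : ∃ b, det a b = 1 :=
  let ⟨u, v, huv⟩ := h
  ⟨(-v, u), by rw [← huv, det]; ring⟩

theorem det_self_add (a b : ℤ × ℤ) : det a (a + b) = det a b := by
  simp only [det, Prod.fst_add, Prod.snd_add]; ring

@[simp] theorem det_neg_left : det (-a) b = -det a b := by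
  simp only [det, Prod.fst_neg, Prod.snd_neg]; ring

@[simp] theorem det_neg_right : det a (-b) = -det a b := by
  simp only [det, Prod.fst_neg, Prod.snd_neg]; ring

theorem det_neg_right_eq_one (h : |det a b| = 1) (h' : det a b ≠ 1) : det a (-b) = 1 := by
  rw [det_neg_right, neg_eq_iff_eq_neg]
  exact (abs_eq zero_le_one |>.mp h).resolve_left h'

end Det

def vertex (p : ℤ × ℤ) (hp : IsCoprime p.1 p.2) : FareyVertex :=
  Quotient.mk fareySetoid ⟨p, hp⟩

section Vertex

variable {p q : ℤ × ℤ} {hp : IsCoprime p.1 p.2} {hq : IsCoprime q.1 q.2}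

theorem vertex_congr (h : p = q) : vertex p hp = vertex q hq := by
  subst h; rfl

theorem vertex_neg (hp' : IsCoprime (-p).1 (-p).2) : vertex (-p) hp' = vertex p hp :=
  Quotient.sound (Or.inr rfl)

theorem vertex_ne_of_det_ne_zero (h : det p q ≠ 0) : vertex p hp ≠ vertex q hq := by
  intro hpq
  rcases Quotient.exact hpq with hpq | hpq <;>
    · obtain rfl : p = _ := hpq
      simp [det, mul_comm] at h

theorem adj_vertex : FareyGraph.Adj (vertex p hp) (vertex q hq) ↔ |det p q| = 1 := Iff.rfl

end Vertex

def mulVec (g : SL(2, ℤ)) (p : ℤ × ℤ) : ℤ × ℤ :=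
  (g 0 0 * p.1 + g 0 1 * p.2, g 1 0 * p.1 + g 1 1 * p.2)

section MulVec

variable (g : SL(2, ℤ)) (p q : ℤ × ℤ)

theorem det_fin_two_eq_one : g 0 0 * g 1 1 - g 0 1 * g 1 0 = 1 := by
  rw [← Matrix.det_fin_two]; exact g.det_coe

theorem det_mulVec : det (mulVec g p) (mulVec g q) = det p q := by
  simp only [det, mulVec]
  linear_combination (p.1 * q.2 - p.2 * q.1) * det_fin_two_eq_one g

theorem mulVec_add : mulVec g (p + q) = mulVec g p + mulVec g q := by
  ext <;> simp only [mulVec, Prod.fst_add, Prod.snd_add] <;> ring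

theorem mulVec_neg : mulVec g (-p) = -mulVec g p := by
  ext <;> simp only [mulVec, Prod.fst_neg, Prod.snd_neg] <;> ring

theorem mulVec_injective : Function.Injective (mulVec g) := by
  intro p q h
  simp only [mulVec, Prod.mk.injEq] at h
  obtain ⟨h₁, h₂⟩ := h
  ext
  · linear_combination g 1 1 * h₁ - g 0 1 * h₂ - (p.1 - q.1) * det_fin_two_eq_one g
  · linear_combination g 0 0 * h₂ - g 1 0 * h₁ - (p.2 - q.2) * det_fin_two_eq_one g

variable {g p}

theorem isCoprime_mulVec (hp : IsCoprime p.1 p.2) : IsCoprime (mulVec g p).1 (mulVec g p).2 :=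
  let ⟨_, hq⟩ := exists_det_eq_one_of_isCoprime hp
  isCoprime_of_det_eq_one_left ((det_mulVec g p _).trans hq)

end MulVec

def vertexMap (g : SL(2, ℤ)) : FareyVertex → FareyVertex :=
  Quotient.map (fun x ↦ ⟨mulVec g x.1, isCoprime_mulVec x.2⟩) <| by
    rintro x y (h | h)
    · exact Or.inl (congrArg (mulVec g) h)
    · exact Or.inr ((congrArg (mulVec g) h).trans (mulVec_neg g _))

def embedding (g : SL(2, ℤ)) : FareyGraph ↪g FareyGraph where
  toFun := vertexMap g
  inj' := by
    rintro ⟨x⟩ ⟨y⟩ h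
    refine Quotient.sound ?_
    rcases Quotient.exact h with h | h
    · exact Or.inl (mulVec_injective g h)
    · exact Or.inr (mulVec_injective g (h.trans (mulVec_neg g _).symm))
  map_rel_iff' := by
    rintro ⟨x⟩ ⟨y⟩
    exact iff_of_eq (congrArg (|·| = 1) (det_mulVec g x.1 y.1))

theorem embedding_vertex (g : SL(2, ℤ)) (p : ℤ × ℤ) (hp : IsCoprime p.1 p.2) :
    embedding g (vertex p hp) = vertex (mulVec g p) (isCoprime_mulVec hp) := rfl

def col (g : SL(2, ℤ)) (j : Fin 2) : ℤ × ℤ := (g 0 j, g 1 j)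

section Triangle

variable (g h : SL(2, ℤ))

theorem det_col : det (col g 0) (col g 1) = 1 := by
  simp only [det, col, ← det_fin_two_eq_one g, mul_comm (g 1 0)]

theorem det_col_add : det (col g 0) (col g 0 + col g 1) = 1 :=
  (det_self_add _ _).trans (det_col g)

theorem col_mul (j : Fin 2) : col (g * h) j = mulVec g (col h j) := by
  simp [col, mulVec, Matrix.mul_apply, Fin.sum_univ_two]

noncomputable def triangle : Finset FareyVertex :=
  {vertex (col g 0) (isCoprime_of_det_eq_one_left (det_col g)),
    vertex (col g 1) (isCoprime_of_det_eq_one_right (det_col g)),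
    vertex (col g 0 + col g 1) (isCoprime_of_det_eq_one_right (det_col_add g))}

theorem isNClique_triangle : FareyGraph.IsNClique 3 (triangle g) := by
  rw [triangle, SimpleGraph.is3Clique_triple_iff]
  have : det (col g 1) (col g 0 + col g 1) = -1 := by
    rw [← det_col g]; simp only [det, Prod.fst_add, Prod.snd_add]; ring
  simp only [adj_vertex, det_col, det_col_add, this]
  norm_num

theorem triangle_mul : triangle (g * h) = (triangle h).map (embedding g).toEmbedding := by
  simp only [triangle, Finset.map_insert, Finset.map_singleton, RelEmbedding.coe_toEmbedding,
    embedding_vertex, col_mul, mulVec_add]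

end Triangle

theorem triangle_one : triangle 1 =
    {vertex (1, 0) isCoprime_one_left, vertex (0, 1) isCoprime_one_right,
      vertex (1, 1) isCoprime_one_left} := by
  simp [triangle, col]

theorem triangle_S : triangle S =
    {vertex (1, 0) isCoprime_one_left, vertex (0, 1) isCoprime_one_right,
      vertex (-1, 1) isCoprime_one_right} := by
  rw [← vertex_neg (p := (1, 0)) isCoprime_one_left.neg_left, Finset.insert_comm]
  simp [triangle, col, coe_S]

theorem triangle_T : triangle T =
    {vertex (1, 0) isCoprime_one_left, vertex (1, 1) isCoprime_one_left,
      vertex (2, 1) isCoprime_one_right} := by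
  simp [triangle, col, coe_T]

theorem triangleAdj_one_S : FareyGraph.TriangleAdj (triangle 1) (triangle S) := by
  refine ⟨isNClique_triangle 1, isNClique_triangle S, ?_⟩
  rw [triangle_one, triangle_S,
    Finset.insert_insert_inter_insert_insert (vertex_ne_of_det_ne_zero (by simp [det]))]
  exact ⟨_, _, by simp [adj_vertex, det], rfl⟩

theorem triangleAdj_one_T : FareyGraph.TriangleAdj (triangle 1) (triangle T) := by
  refine ⟨isNClique_triangle 1, isNClique_triangle T, ?_⟩
  rw [triangle_one, triangle_T, Finset.pair_comm (vertex (0, 1) _),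
    Finset.insert_insert_inter_insert_insert (vertex_ne_of_det_ne_zero (by simp [det]))]
  exact ⟨_, _, by simp [adj_vertex, det], rfl⟩

theorem reflTransGen_triangle_mul_left (k : SL(2, ℤ)) {g h : SL(2, ℤ)}
    (hgh : ReflTransGen FareyGraph.TriangleAdj (triangle g) (triangle h)) :
    ReflTransGen FareyGraph.TriangleAdj (triangle (k * g)) (triangle (k * h)) := by
  simpa only [triangle_mul] using hgh.lift _ fun _ _ hst ↦ hst.map (embedding k)

theorem reflTransGen_triangle_one (g : SL(2, ℤ)) :
    ReflTransGen FareyGraph.TriangleAdj (triangle 1) (triangle g) := by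
  have hg : g ∈ Subgroup.closure {S, T} := by
    rw [SpecialLinearGroup.SL2Z_generators]; exact Subgroup.mem_top g
  induction hg using Subgroup.closure_induction with
  | mem g hg =>
    rcases hg with rfl | rfl
    · exact .single triangleAdj_one_S
    · exact .single triangleAdj_one_T
  | one => exact .refl
  | mul g h _ _ hg hh =>
    have := reflTransGen_triangle_mul_left g hh
    rw [mul_one] at this
    exact hg.trans this
  | inv g _ hg =>
    have := reflTransGen_triangle_mul_left g⁻¹ hg
    rw [mul_one, inv_mul_cancel] at this
    exact Std.Symm.symm _ _ this

section Representation

variable {a b c : ℤ × ℤ} {ha : IsCoprime a.1 a.2} {hb : IsCoprime b.1 b.2}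
  {hc : IsCoprime c.1 c.2}

theorem exists_triangle_eq_of_det_eq_one (h : det a b = 1)
    {hab : IsCoprime (a + b).1 (a + b).2} :
    ∃ g, triangle g = {vertex a ha, vertex b hb, vertex (a + b) hab} := by
  refine ⟨⟨!![a.1, b.1; a.2, b.2], by rw [Matrix.det_fin_two_of, ← h, det]; ring⟩, ?_⟩
  simp [triangle, col]

-- By Cramer's rule, `det a b • c = det c b • a + det a c • b`, so `c = ±b - a`.
theorem exists_triangle_eq_of_det_eq_one_of_det_eq_one (hab : det a b = 1) (hbc : det b c = 1)
    (hac : |det a c| = 1) : ∃ g, triangle g = {vertex a ha, vertex b hb, vertex c hc} := by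
  rcases abs_eq zero_le_one |>.mp hac with hac | hac
  · have hb' : b = a + c := by
      simp only [det] at hab hbc hac
      ext <;> simp only [Prod.fst_add, Prod.snd_add]
      · linear_combination c.1 * hab + a.1 * hbc - b.1 * hac
      · linear_combination c.2 * hab + a.2 * hbc - b.2 * hac
    obtain ⟨g, hg⟩ := exists_triangle_eq_of_det_eq_one (ha := ha) (hb := hc) (hab := hb' ▸ hb) hac
    refine ⟨g, hg.trans ?_⟩
    rw [Finset.pair_comm, vertex_congr hb'.symm]
  · have hc' : -(a + b) = c := by
      simp only [det] at hab hbc hac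
      ext <;> simp only [Prod.fst_add, Prod.snd_add, Prod.fst_neg, Prod.snd_neg]
      · linear_combination c.1 * hab + a.1 * hbc - b.1 * hac
      · linear_combination c.2 * hab + a.2 * hbc - b.2 * hac
    obtain ⟨g, hg⟩ := exists_triangle_eq_of_det_eq_one (ha := ha) (hb := hb)
      (hab := isCoprime_of_det_eq_one_right ((det_self_add a b).trans hab)) hab
    refine ⟨g, hg.trans ?_⟩
    rw [← vertex_neg (p := a + b) (hc' ▸ hc), vertex_congr hc']

theorem exists_triangle_eq_of_abs_det_eq_one (hab : |det a b| = 1) (hbc : |det b c| = 1)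
    (hac : |det a c| = 1) : ∃ g, triangle g = {vertex a ha, vertex b hb, vertex c hc} := by
  wlog hab' : det a b = 1 generalizing b
  · obtain ⟨g, hg⟩ := this (b := -b) (hb := hb.neg_neg) (by simpa) (by simpa)
      (det_neg_right_eq_one hab hab')
    exact ⟨g, by rwa [vertex_neg] at hg⟩
  wlog hbc' : det b c = 1 generalizing c
  · obtain ⟨g, hg⟩ := this (c := -c) (hc := hc.neg_neg) (by simpa) (by simpa)
      (det_neg_right_eq_one hbc hbc')
    exact ⟨g, by rwa [vertex_neg] at hg⟩
  exact exists_triangle_eq_of_det_eq_one_of_det_eq_one hab' hbc' hac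

end Representation

theorem exists_triangle_eq {s : Finset FareyVertex} (hs : FareyGraph.IsNClique 3 s) :
    ∃ g, triangle g = s := by
  obtain ⟨u, v, w, -, -, -, rfl⟩ := Finset.card_eq_three.mp hs.2
  obtain ⟨huv, huw, hvw⟩ := SimpleGraph.is3Clique_triple_iff.mp hs
  induction u, v, w using Quotient.inductionOn₃ with
  | h x y z => exact exists_triangle_eq_of_abs_det_eq_one huv hvw huw

end Farey

/-- Any two triangles of the Farey graph are chain-connected. -/
theorem fareyGraph_triangles_chainConnected (s t : Finset FareyVertex)
    (hs : FareyGraph.IsNClique 3 s) (ht : FareyGraph.IsNClique 3 t) :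
    ChainConnected FareyGraph s t := by
  obtain ⟨g, rfl⟩ := Farey.exists_triangle_eq hs
  obtain ⟨h, rfl⟩ := Farey.exists_triangle_eq ht
  refine chainConnected_of_reflTransGen hs ?_
  exact (Std.Symm.symm _ _ (Farey.reflTransGen_triangle_one g)).trans
    (Farey.reflTransGen_triangle_one h)
end

section
/- Let a, c be adjacent vertices of the Farey graph F and let b, b' be the two distinct vertices of F such that {a, c, b} and {a, c, b'} are triangles of F. Then a vertex x of F is adjacent to both b and b' if and only if x = a or x = c. -/
/-!
Fix representatives `A`, `C` of the edge and give every pair `Y` the coordinates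
`u = det(Y, A)`, `v = det(Y, C)`. Since `det(A, C) = ±1`, the Plücker identity turns every
determinant `det(X, Y)` into `±(u_X v_Y - v_X u_Y)`. The third vertices `b`, `b'` have
coordinates `(±1, ±1)`, and `b ≠ b'` forces their products `ε = u v` to be `1` and `-1`.
Adjacency of `x` to a vertex of product `ε` reads `u² + v² - 2εuv = 1`; having it for both
signs of `ε` forces `uv = 0`, i.e. `x = a` or `x = c`.
-/

theorem Int.eq_zero_or_eq_zero_of_abs_mul_sub_mul_eq_one {u v p q p' q' : ℤ}
    (hp : |p| = 1) (hq : |q| = 1) (hp' : |p'| = 1) (hq' : |q'| = 1)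
    (hpq : p * q' - q * p' ≠ 0) (h : |u * q - v * p| = 1) (h' : |u * q' - v * p'| = 1) :
    u = 0 ∨ v = 0 := by
  have sq_eq_one : ∀ w : ℤ, |w| = 1 → w ^ 2 = 1 := fun w hw => by rw [← sq_abs, hw, one_pow]
  have hp2 := sq_eq_one p hp
  have hq2 := sq_eq_one q hq
  have hp'2 := sq_eq_one p' hp'
  have hq'2 := sq_eq_one q' hq'
  have hε : p * q - p' * q' ≠ 0 := by
    intro hε
    have hp'q : p' * q ≠ 0 := mul_ne_zero (by rintro rfl; simp at hp') (by rintro rfl; simp at hq)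
    have : p' * q * (p * q' - q * p') = 0 := by
      linear_combination p' * q' * hε + p' ^ 2 * hq'2 - p' ^ 2 * hq2
    exact hpq ((mul_eq_zero.mp this).resolve_left hp'q)
  have huv : 2 * u * v * (p * q - p' * q') = 0 := by
    linear_combination -(sq_eq_one _ h) + sq_eq_one _ h' + u ^ 2 * (hq2 - hq'2) +
      v ^ 2 * (hp2 - hp'2)
  simpa [hε] using huv

theorem fareyGraph_adj_mk_mk_iff (X Y : FareyPair) :
    FareyGraph.Adj (Quotient.mk fareySetoid X) (Quotient.mk fareySetoid Y) ↔
      |fareyDet X Y| = 1 :=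
  Iff.rfl

theorem mk_eq_mk_of_fareyDet_eq_zero {X Y : FareyPair} (h : fareyDet X Y = 0) :
    (Quotient.mk fareySetoid X : FareyVertex) = Quotient.mk fareySetoid Y := by
  obtain ⟨⟨x₁, x₂⟩, α, β, hX⟩ := X
  obtain ⟨⟨y₁, y₂⟩, hY⟩ := Y
  change x₁ * y₂ - x₂ * y₁ = 0 at h
  change α * x₁ + β * x₂ = 1 at hX
  -- `Y = k X` with `k = α y₁ + β y₂`, and coprimality of `Y` makes `k` a unit
  have h₁ : y₁ = (α * y₁ + β * y₂) * x₁ := by linear_combination -y₁ * hX - β * h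
  have h₂ : y₂ = (α * y₁ + β * y₂) * x₂ := by linear_combination -y₂ * hX + α * h
  apply Quotient.sound
  rcases Int.isUnit_iff.mp (hY.isUnit_of_dvd' ⟨x₁, h₁⟩ ⟨x₂, h₂⟩) with hk | hk <;>
    rw [hk] at h₁ h₂
  · exact Or.inl (Prod.ext (by simp [h₁]) (by simp [h₂]))
  · exact Or.inr (Prod.ext (by simp [h₁]) (by simp [h₂]))

theorem fareyDet_mul_fareyDet (A C X Y : FareyPair) :
    fareyDet A C * fareyDet X Y =
      fareyDet X A * fareyDet Y C - fareyDet X C * fareyDet Y A := by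
  simp only [fareyDet]
  ring

theorem abs_fareyDet_eq_of_abs_fareyDet_eq_one {A C : FareyPair} (hAC : |fareyDet A C| = 1)
    (X Y : FareyPair) :
    |fareyDet X Y| = |fareyDet X A * fareyDet Y C - fareyDet X C * fareyDet Y A| := by
  rw [← fareyDet_mul_fareyDet, abs_mul, hAC, one_mul]

theorem fareyGraph_adj_both_diagonal_general (a c b b' : FareyVertex)
    (hbb' : b ≠ b')
    (h1 : FareyGraph.IsNClique 3 {a, c, b}) (h2 : FareyGraph.IsNClique 3 {a, c, b'})
    (x : FareyVertex) :
    (FareyGraph.Adj x b ∧ FareyGraph.Adj x b') ↔ (x = a ∨ x = c) := by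
  obtain ⟨hac, hab, hcb⟩ := SimpleGraph.is3Clique_triple_iff.mp h1
  obtain ⟨-, hab', hcb'⟩ := SimpleGraph.is3Clique_triple_iff.mp h2
  refine ⟨fun ⟨hxb, hxb'⟩ => ?_, by rintro (rfl | rfl) <;> constructor <;> assumption⟩
  obtain ⟨A, rfl⟩ := Quotient.exists_rep a
  obtain ⟨C, rfl⟩ := Quotient.exists_rep c
  obtain ⟨B, rfl⟩ := Quotient.exists_rep b
  obtain ⟨B', rfl⟩ := Quotient.exists_rep b'
  obtain ⟨X, rfl⟩ := Quotient.exists_rep x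
  have habs := abs_fareyDet_eq_of_abs_fareyDet_eq_one (fareyGraph_adj_mk_mk_iff A C |>.mp hac)
  have hBB' : fareyDet B B' ≠ 0 := fun h => hbb' (mk_eq_mk_of_fareyDet_eq_zero h)
  rw [fareyGraph_adj_mk_mk_iff, habs] at hxb hxb'
  rw [← abs_ne_zero, habs, abs_ne_zero] at hBB'
  refine (Int.eq_zero_or_eq_zero_of_abs_mul_sub_mul_eq_one ?_ ?_ ?_ ?_ hBB' hxb hxb').imp
    mk_eq_mk_of_fareyDet_eq_zero mk_eq_mk_of_fareyDet_eq_zero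
  exacts [hab.symm, hcb.symm, hab'.symm, hcb'.symm]

/-- If `b, b'` are the two distinct third vertices of the two triangles of the Farey
graph on an edge `{a, c}`, then a vertex is adjacent to both `b` and `b'` iff it
equals `a` or `c`. -/
theorem fareyGraph_adj_both_diagonal (a c b b' : FareyVertex)
    (hac : FareyGraph.Adj a c) (hbb' : b ≠ b')
    (h1 : FareyGraph.IsNClique 3 {a, c, b}) (h2 : FareyGraph.IsNClique 3 {a, c, b'})
    (x : FareyVertex) :
    (FareyGraph.Adj x b ∧ FareyGraph.Adj x b') ↔ (x = a ∨ x = c) :=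
  fareyGraph_adj_both_diagonal_general a c b b' hbb' h1 h2 x
end
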